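/- arXiv:2512.04454 — 8 statements merged into one kernel-verified Lean document; each statement's English description precedes it below -/
import Mathlib

section
/- Let X be a real normed space, let S ⊆ X be a subset containing 0 and closed under multiplication by nonnegative real scalars, let K ≥ 0, and let f : S → ℝ satisfy f(0) = 0, f(α·y) = α·f(y) for all α ≥ 0 and y ∈ S, and |f(y) − f(z)| ≤ K·‖y − z‖ for all y, z ∈ S. Then there exists a function F : X → ℝ such that F is positively homogeneous on all of X (F(α·x) = α·F(x) for all α ≥ 0 and x ∈ X), F is K-Lipschitz on X, and F(y) = f(y) for every y ∈ S. -/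
/-- McShane-type extension theorem for positively homogeneous real-valued
Lipschitz functions: a positively homogeneous `K`-Lipschitz function on a
subset `S` of a real normed space that contains `0` and is closed under
nonnegative scalar multiplication extends to a positively homogeneous
`K`-Lipschitz function on the whole space. -/
theorem stmt_0 {X : Type*} [NormedAddCommGroup X] [NormedSpace ℝ X]
    (S : Set X) (h0S : (0 : X) ∈ S)
    (hS : ∀ (α : ℝ), 0 ≤ α → ∀ y ∈ S, α • y ∈ S)
    (K : ℝ) (hK : 0 ≤ K) (f : X → ℝ) (hf0 : f 0 = 0)
    (hfh : ∀ (α : ℝ), 0 ≤ α → ∀ y ∈ S, f (α • y) = α * f y)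
    (hfL : ∀ y ∈ S, ∀ z ∈ S, |f y - f z| ≤ K * ‖y - z‖) :
    ∃ F : X → ℝ,
      (∀ (α : ℝ), 0 ≤ α → ∀ x : X, F (α • x) = α * F x) ∧
      (∀ x y : X, |F x - F y| ≤ K * ‖x - y‖) ∧
      (∀ y ∈ S, F y = f y) := by
  classical
  haveI hne : Nonempty S := ⟨⟨0, h0S⟩⟩
  set F : X → ℝ := fun x => ⨅ y : S, (f y + K * ‖x - (y : X)‖) with hFdef
  have hfy : ∀ y ∈ S, -(K * ‖y‖) ≤ f y := by
    intro y hy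
    have h := hfL y hy 0 h0S
    rw [hf0, sub_zero, sub_zero] at h
    linarith [(abs_le.1 h).1]
  have hbdd : ∀ x : X,
      BddBelow (Set.range fun y : S => f y + K * ‖x - (y : X)‖) := by
    intro x
    refine ⟨-(K * ‖x‖), ?_⟩
    rintro _ ⟨⟨y, hy⟩, rfl⟩
    have h1 := hfy y hy
    have h2 : ‖y‖ - ‖x‖ ≤ ‖x - y‖ := by
      have := norm_sub_norm_le y x
      rwa [norm_sub_rev y x] at this
    have h3 : K * (‖y‖ - ‖x‖) ≤ K * ‖x - y‖ := mul_le_mul_of_nonneg_left h2 hK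
    simp only
    nlinarith
  have hle : ∀ x : X, ∀ z ∈ S, F x ≤ f z + K * ‖x - z‖ := by
    intro x z hz
    exact ciInf_le (hbdd x) ⟨z, hz⟩
  have hge : ∀ (x : X) (c : ℝ), (∀ z ∈ S, c ≤ f z + K * ‖x - z‖) → c ≤ F x := by
    intro x c h
    exact le_ciInf fun z => h z z.2
  -- agreement on S
  have hagree : ∀ y ∈ S, F y = f y := by
    intro y hy
    have h1 : F y ≤ f y := by
      have := hle y y hy
      simpa using this
    have h2 : f y ≤ F y := by
      refine hge y (f y) ?_
      intro z hz
      have := (abs_le.1 (hfL y hy z hz)).2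
      linarith
    linarith
  -- one-sided Lipschitz
  have hlip1 : ∀ x x' : X, F x ≤ F x' + K * ‖x - x'‖ := by
    intro x x'
    have : F x - K * ‖x - x'‖ ≤ F x' := by
      refine hge x' _ ?_
      intro z hz
      have h1 := hle x z hz
      have h2 : ‖x - z‖ ≤ ‖x - x'‖ + ‖x' - z‖ := by
        have := norm_add_le (x - x') (x' - z)
        simpa using this
      have h3 : K * ‖x - z‖ ≤ K * (‖x - x'‖ + ‖x' - z‖) :=
        mul_le_mul_of_nonneg_left h2 hK
      nlinarith
    linarith
  have hlip : ∀ x y : X, |F x - F y| ≤ K * ‖x - y‖ := by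
    intro x y
    rw [abs_le]
    constructor
    · have := hlip1 y x
      rw [norm_sub_rev] at this
      linarith
    · have := hlip1 x y
      linarith
  -- F 0 = 0
  have hF0 : F 0 = 0 := by
    have h1 : F 0 ≤ 0 := by
      have := hle 0 0 h0S
      simpa [hf0] using this
    have h2 : (0 : ℝ) ≤ F 0 := by
      refine hge 0 0 ?_
      intro z hz
      have := hfy z hz
      rw [zero_sub, norm_neg]
      linarith
    linarith
  -- one-sided homogeneity
  have hkey : ∀ α : ℝ, 0 < α → ∀ x : X, F (α • x) ≤ α * F x := by
    intro α hα x
    have h : α⁻¹ * F (α • x) ≤ F x := by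
      refine hge x _ ?_
      intro z hz
      have h1 := hle (α • x) (α • z) (hS α hα.le z hz)
      rw [hfh α hα.le z hz] at h1
      have hnorm : ‖α • x - α • z‖ = α * ‖x - z‖ := by
        rw [← smul_sub, norm_smul, Real.norm_eq_abs, abs_of_pos hα]
      rw [hnorm] at h1
      rw [inv_mul_le_iff₀ hα]
      calc F (α • x) ≤ α * f z + K * (α * ‖x - z‖) := h1
        _ = α * (f z + K * ‖x - z‖) := by ring
    calc F (α • x) = α * (α⁻¹ * F (α • x)) := by field_simp
      _ ≤ α * F x := mul_le_mul_of_nonneg_left h hα.le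
  have hhom : ∀ α : ℝ, 0 ≤ α → ∀ x : X, F (α • x) = α * F x := by
    intro α hα x
    rcases eq_or_lt_of_le hα with h | h
    · rw [← h, zero_smul, zero_mul, hF0]
    · refine le_antisymm (hkey α h x) ?_
      have h2 := hkey α⁻¹ (inv_pos.2 h) (α • x)
      rw [inv_smul_smul₀ h.ne' x] at h2
      calc α * F x ≤ α * (α⁻¹ * F (α • x)) := mul_le_mul_of_nonneg_left h2 hα
        _ = F (α • x) := by field_simp
  exact ⟨F, hhom, hlip, hagree⟩
end

section
/- Let X be a real normed space, let S ⊆ X contain 0 and be closed under multiplication by nonnegative real scalars, let K ≥ 0, and let f : S → ℝ satisfy f(0) = 0, f(α·y) = α·f(y) for all α ≥ 0 and y ∈ S, and |f(y) − f(z)| ≤ K·‖y − z‖ for all y, z ∈ S. Define F : X → ℝ by F(x) = sup_{y ∈ S} ( f(y) − K·‖x − y‖ ). Then F is well defined (the supremum is finite for every x), F is K-Lipschitz on X, F agrees with f on S, and F is positively homogeneous: F(t·x) = t·F(x) for every t ≥ 0 and x ∈ X. -/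
/-- The McShane lower extension `F x = sup_{y ∈ S} (f y - K * ‖x - y‖)` of a
positively homogeneous `K`-Lipschitz function `f` on a set `S` containing `0`
and closed under nonnegative scalar multiplication is well defined (the sup is
over a nonempty set bounded above), `K`-Lipschitz, agrees with `f` on `S`, and
is positively homogeneous. -/
theorem stmt_1 {X : Type*} [NormedAddCommGroup X] [NormedSpace ℝ X]
    (S : Set X) (h0S : (0 : X) ∈ S)
    (hS : ∀ (α : ℝ), 0 ≤ α → ∀ y ∈ S, α • y ∈ S)
    (K : ℝ) (hK : 0 ≤ K) (f : X → ℝ) (hf0 : f 0 = 0)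
    (hfh : ∀ (α : ℝ), 0 ≤ α → ∀ y ∈ S, f (α • y) = α * f y)
    (hfL : ∀ y ∈ S, ∀ z ∈ S, |f y - f z| ≤ K * ‖y - z‖) :
    (∀ x : X, BddAbove ((fun y => f y - K * ‖x - y‖) '' S)) ∧
    (∀ x₁ x₂ : X,
        |sSup ((fun y => f y - K * ‖x₁ - y‖) '' S) -
          sSup ((fun y => f y - K * ‖x₂ - y‖) '' S)| ≤ K * ‖x₁ - x₂‖) ∧
    (∀ y ∈ S, sSup ((fun z => f z - K * ‖y - z‖) '' S) = f y) ∧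
    (∀ (t : ℝ), 0 ≤ t → ∀ x : X,
        sSup ((fun y => f y - K * ‖t • x - y‖) '' S) =
          t * sSup ((fun y => f y - K * ‖x - y‖) '' S)) := by

  have hfub : ∀ y ∈ S, f y ≤ K * ‖y‖ := by
    intro y hy
    have h := hfL y hy 0 h0S
    rw [hf0, sub_zero, sub_zero] at h
    exact le_trans (le_abs_self _) h
  have hne : ∀ x : X, ((fun y => f y - K * ‖x - y‖) '' S).Nonempty :=
    fun x => ⟨_, Set.mem_image_of_mem _ h0S⟩
  have hbdd : ∀ x : X, BddAbove ((fun y => f y - K * ‖x - y‖) '' S) := by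
    intro x
    refine ⟨K * ‖x‖, ?_⟩
    rintro _ ⟨y, hy, rfl⟩
    dsimp only
    have h1 : f y ≤ K * ‖y‖ := hfub y hy
    have h2 : ‖y‖ ≤ ‖x‖ + ‖x - y‖ := by
      have := norm_sub_le x (x - y)
      simpa using this
    nlinarith [norm_nonneg (x - y), norm_nonneg y]
  have hlip : ∀ x₁ x₂ : X,
      sSup ((fun y => f y - K * ‖x₁ - y‖) '' S) ≤
        sSup ((fun y => f y - K * ‖x₂ - y‖) '' S) + K * ‖x₁ - x₂‖ := by
    intro x₁ x₂
    refine csSup_le (hne x₁) ?_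
    rintro _ ⟨y, hy, rfl⟩
    dsimp only
    have h1 : f y - K * ‖x₂ - y‖ ≤ sSup ((fun y => f y - K * ‖x₂ - y‖) '' S) :=
      le_csSup (hbdd x₂) (Set.mem_image_of_mem _ hy)
    have h2 : ‖x₂ - y‖ ≤ ‖x₂ - x₁‖ + ‖x₁ - y‖ := by
      have := norm_sub_le_norm_sub_add_norm_sub x₂ x₁ y
      simpa using this
    have h3 : ‖x₂ - x₁‖ = ‖x₁ - x₂‖ := norm_sub_rev _ _
    nlinarith
  have hagree : ∀ y ∈ S, sSup ((fun z => f z - K * ‖y - z‖) '' S) = f y := by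
    intro y hy
    refine le_antisymm ?_ ?_
    · refine csSup_le (hne y) ?_
      rintro _ ⟨z, hz, rfl⟩
      dsimp only
      have := hfL z hz y hy
      have h2 : f z - f y ≤ K * ‖z - y‖ := le_trans (le_abs_self _) this
      rw [norm_sub_rev] at h2
      linarith
    · have := le_csSup (hbdd y) (Set.mem_image_of_mem (fun z => f z - K * ‖y - z‖) hy)
      simpa using this
  refine ⟨hbdd, ?_, hagree, ?_⟩
  · intro x₁ x₂
    rw [abs_sub_le_iff]
    constructor
    · linarith [hlip x₁ x₂]
    · have := hlip x₂ x₁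
      rw [norm_sub_rev] at this
      linarith
  · intro t ht x
    rcases eq_or_lt_of_le ht with h0 | h0
    · subst h0
      rw [zero_mul, zero_smul]
      have := hagree 0 h0S
      rw [this, hf0]
    · have hseteq : ((fun y => f y - K * ‖t • x - y‖) '' S) =
          (fun r => t * r) '' ((fun y => f y - K * ‖x - y‖) '' S) := by
        ext r
        constructor
        · rintro ⟨y, hy, rfl⟩
          refine ⟨f ((1/t) • y) - K * ‖x - (1/t) • y‖,
            Set.mem_image_of_mem _ (hS (1/t) (by positivity) y hy), ?_⟩
          have hyy : t • ((1/t) • y) = y := by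
            rw [smul_smul]; field_simp; exact one_smul _ y
          have h1 : f y = t * f ((1/t) • y) := by
            rw [← hyy, hfh t ht _ (hS (1/t) (by positivity) y hy), hyy]
          have h2 : ‖t • x - y‖ = t * ‖x - (1/t) • y‖ := by
            rw [← hyy, ← smul_sub, norm_smul, Real.norm_of_nonneg ht, hyy]
          dsimp only; rw [h1, h2]; ring
        · rintro ⟨_, ⟨z, hz, rfl⟩, rfl⟩
          refine ⟨t • z, hS t ht z hz, ?_⟩
          have h1 : f (t • z) = t * f z := hfh t ht z hz
          have h2 : ‖t • x - t • z‖ = t * ‖x - z‖ := by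
            rw [← smul_sub, norm_smul, Real.norm_of_nonneg ht]
          simp only [h1, h2]; ring
      rw [hseteq]
      have := Real.sSup_smul_of_nonneg ht ((fun y => f y - K * ‖x - y‖) '' S)
      rw [smul_eq_mul] at this
      rw [← this]
      congr 1
end

section
/- Let X be a real normed space, let S ⊆ X contain 0 and be closed under multiplication by nonnegative real scalars, let K ≥ 0, and let f : S → ℝ satisfy f(0) = 0, f(α·y) = α·f(y) for all α ≥ 0 and y ∈ S, and |f(y) − f(z)| ≤ K·‖y − z‖ for all y, z ∈ S. Define G : X → ℝ by G(x) = inf_{y ∈ S} ( f(y) + K·‖x − y‖ ). Then G is well defined (the infimum is finite for every x), G is K-Lipschitz on X, G agrees with f on S, and G is positively homogeneous: G(t·x) = t·G(x) for every t ≥ 0 and x ∈ X. -/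
open Pointwise


/-- The McShane upper extension `G x = inf_{y ∈ S} (f y + K * ‖x - y‖)` of a
positively homogeneous `K`-Lipschitz function `f` on a set `S` containing `0`
and closed under nonnegative scalar multiplication is well defined (the inf is
over a nonempty set bounded below), `K`-Lipschitz, agrees with `f` on `S`, and
is positively homogeneous. -/
theorem stmt_2 {X : Type*} [NormedAddCommGroup X] [NormedSpace ℝ X]
    (S : Set X) (h0S : (0 : X) ∈ S)
    (hS : ∀ (α : ℝ), 0 ≤ α → ∀ y ∈ S, α • y ∈ S)
    (K : ℝ) (hK : 0 ≤ K) (f : X → ℝ) (hf0 : f 0 = 0)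
    (hfh : ∀ (α : ℝ), 0 ≤ α → ∀ y ∈ S, f (α • y) = α * f y)
    (hfL : ∀ y ∈ S, ∀ z ∈ S, |f y - f z| ≤ K * ‖y - z‖) :
    (∀ x : X, BddBelow ((fun y => f y + K * ‖x - y‖) '' S)) ∧
    (∀ x₁ x₂ : X,
        |sInf ((fun y => f y + K * ‖x₁ - y‖) '' S) -
          sInf ((fun y => f y + K * ‖x₂ - y‖) '' S)| ≤ K * ‖x₁ - x₂‖) ∧
    (∀ y ∈ S, sInf ((fun z => f z + K * ‖y - z‖) '' S) = f y) ∧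
    (∀ (t : ℝ), 0 ≤ t → ∀ x : X,
        sInf ((fun y => f y + K * ‖t • x - y‖) '' S) =
          t * sInf ((fun y => f y + K * ‖x - y‖) '' S)) := by
  -- lower bound on f
  have hflb : ∀ y ∈ S, -(K * ‖y‖) ≤ f y := by
    intro y hy
    have := hfL y hy 0 h0S
    rw [hf0, sub_zero, sub_zero] at this
    have := abs_le.mp this
    linarith [this.1]
  have hne : ∀ x : X, ((fun y => f y + K * ‖x - y‖) '' S).Nonempty :=
    fun x => ⟨_, ⟨0, h0S, rfl⟩⟩
  have hbd : ∀ x : X, BddBelow ((fun y => f y + K * ‖x - y‖) '' S) := by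
    intro x
    refine ⟨-(K * ‖x‖), ?_⟩
    rintro r ⟨y, hy, rfl⟩
    have h1 : ‖y‖ ≤ ‖x‖ + ‖x - y‖ := by
      have := norm_sub_le x (x - y)
      simpa using this
    have h2 : K * ‖y‖ ≤ K * (‖x‖ + ‖x - y‖) := mul_le_mul_of_nonneg_left h1 hK
    have := hflb y hy
    simp only
    nlinarith
  have key : ∀ x₁ x₂ : X,
      sInf ((fun y => f y + K * ‖x₁ - y‖) '' S) ≤
        sInf ((fun y => f y + K * ‖x₂ - y‖) '' S) + K * ‖x₁ - x₂‖ := by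
    intro x₁ x₂
    rw [← sub_le_iff_le_add]
    apply le_csInf (hne x₂)
    rintro r ⟨y, hy, rfl⟩
    have h1 : sInf ((fun y => f y + K * ‖x₁ - y‖) '' S) ≤ f y + K * ‖x₁ - y‖ :=
      csInf_le (hbd x₁) ⟨y, hy, rfl⟩
    have h2 : ‖x₁ - y‖ ≤ ‖x₁ - x₂‖ + ‖x₂ - y‖ := by
      have := norm_sub_le_norm_sub_add_norm_sub x₁ x₂ y
      simpa using this
    have h3 : K * ‖x₁ - y‖ ≤ K * (‖x₁ - x₂‖ + ‖x₂ - y‖) := mul_le_mul_of_nonneg_left h2 hK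
    simp only
    nlinarith
  refine ⟨hbd, ?_, ?_, ?_⟩
  · intro x₁ x₂
    rw [abs_sub_le_iff]
    constructor
    · have := key x₁ x₂; linarith
    · have := key x₂ x₁
      rw [norm_sub_rev] at this
      linarith
  · intro y hy
    apply le_antisymm
    · have : sInf ((fun z => f z + K * ‖y - z‖) '' S) ≤ f y + K * ‖y - y‖ :=
        csInf_le (hbd y) ⟨y, hy, rfl⟩
      simpa using this
    · apply le_csInf (hne y)
      rintro r ⟨z, hz, rfl⟩
      have := abs_le.mp (hfL y hy z hz)
      simp only
      linarith [this.2]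
  · intro t ht x
    rcases eq_or_lt_of_le ht with h | h
    · subst h
      simp only [zero_smul, zero_mul, zero_sub]
      apply le_antisymm
      · have : sInf ((fun y => f y + K * ‖(0:X) - y‖) '' S) ≤ f 0 + K * ‖(0:X) - 0‖ :=
          csInf_le (by simpa using hbd (0:X)) ⟨0, h0S, rfl⟩
        simpa [hf0] using this
      · apply le_csInf (by exact ⟨_, ⟨0, h0S, rfl⟩⟩)
        rintro r ⟨y, hy, rfl⟩
        have := hflb y hy
        simp only
        rw [norm_neg]
        linarith
    · have himg : (fun y => f y + K * ‖t • x - y‖) '' S =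
          t • ((fun y => f y + K * ‖x - y‖) '' S) := by
        ext r
        constructor
        · rintro ⟨y, hy, rfl⟩
          refine ⟨f (t⁻¹ • y) + K * ‖x - t⁻¹ • y‖, ⟨t⁻¹ • y, hS t⁻¹ (by positivity) y hy, rfl⟩, ?_⟩
          have hz : t • (t⁻¹ • y) = y := by
            rw [smul_smul, mul_inv_cancel₀ h.ne', one_smul]
          simp only [smul_eq_mul]
          rw [mul_add, ← hfh t ht _ (hS t⁻¹ (by positivity) y hy), hz]
          congr 1
          rw [← mul_assoc, mul_comm t K, mul_assoc]
          congr 1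
          calc t * ‖x - t⁻¹ • y‖ = ‖t • (x - t⁻¹ • y)‖ := by
                rw [norm_smul, Real.norm_eq_abs, abs_of_pos h]
            _ = ‖t • x - y‖ := by rw [smul_sub, hz]
        · rintro ⟨r, ⟨y, hy, rfl⟩, rfl⟩
          refine ⟨t • y, hS t ht y hy, ?_⟩
          simp only [smul_eq_mul]
          rw [hfh t ht y hy, mul_add]
          congr 1
          rw [← smul_sub, norm_smul, Real.norm_eq_abs, abs_of_pos h]
          ring
      rw [himg, Real.sInf_smul_of_nonneg ht, smul_eq_mul]
end

section
/- Let X and Z be real normed spaces, let K ≥ 0, and let g : X → Z satisfy g(0) = 0 and ‖g(u) − g(v)‖ ≤ K·‖u − v‖ for all u, v in S_X ∪ {0}, where S_X = {x ∈ X : ‖x‖ = 1}. Define h : X → Z by h(x) = ‖x‖ · g(x / ‖x‖) for x ≠ 0 and h(0) = 0. Then h is positively homogeneous (h(α·x) = α·h(x) for all α ≥ 0, x ∈ X), h agrees with g on S_X ∪ {0}, and h is (3K)-Lipschitz on all of X. -/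
/-- The positive homogeneous extension `h x = ‖x‖ • g (x / ‖x‖)` (with
`h 0 = 0`) of a function `g` vanishing at `0` and `K`-Lipschitz on
`S_X ∪ {0}` is positively homogeneous, agrees with `g` on `S_X ∪ {0}`, and
is `3K`-Lipschitz on all of `X`. -/
theorem stmt_4 {X Z : Type*} [NormedAddCommGroup X] [NormedSpace ℝ X]
    [NormedAddCommGroup Z] [NormedSpace ℝ Z]
    (K : ℝ) (hK : 0 ≤ K) (g : X → Z) (hg0 : g 0 = 0)
    (hgL : ∀ u ∈ {x : X | ‖x‖ = 1} ∪ {0}, ∀ v ∈ {x : X | ‖x‖ = 1} ∪ {0},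
        ‖g u - g v‖ ≤ K * ‖u - v‖)
    (h : X → Z) (hdef : ∀ x : X, x ≠ 0 → h x = ‖x‖ • g (‖x‖⁻¹ • x))
    (h0 : h 0 = 0) :
    (∀ (α : ℝ), 0 ≤ α → ∀ x : X, h (α • x) = α • h x) ∧
    (∀ u ∈ {x : X | ‖x‖ = 1} ∪ {0}, h u = g u) ∧
    (∀ x y : X, ‖h x - h y‖ ≤ 3 * K * ‖x - y‖) := by
  have h0mem : (0:X) ∈ {x : X | ‖x‖ = 1} ∪ {0} := Or.inr rfl
  have hnorm1 : ∀ x : X, x ≠ 0 → ‖‖x‖⁻¹ • x‖ = 1 := by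
    intro x hx
    rw [norm_smul, norm_inv, norm_norm, inv_mul_cancel₀ (norm_ne_zero_iff.mpr hx)]
  have hbound : ∀ u : X, ‖u‖ = 1 → ‖g u‖ ≤ K := by
    intro u hu
    have := hgL u (Or.inl hu) 0 h0mem
    simpa [hg0, hu] using this
  refine ⟨?_, ?_, ?_⟩
  · intro α hα x
    rcases eq_or_lt_of_le hα with rfl | hα'
    · simp [h0]
    rcases eq_or_ne x 0 with rfl | hx
    · simp [h0]
    have hαx : α • x ≠ 0 := smul_ne_zero (ne_of_gt hα') hx
    rw [hdef _ hαx, hdef _ hx, norm_smul, Real.norm_eq_abs, abs_of_pos hα']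
    have e : (α * ‖x‖)⁻¹ • (α • x) = ‖x‖⁻¹ • x := by
      rw [smul_smul]
      congr 1
      have hxn : ‖x‖ ≠ 0 := norm_ne_zero_iff.mpr hx
      field_simp
    rw [e, smul_smul]
  · rintro u (hu | rfl)
    · have hu1 : ‖u‖ = 1 := hu
      have hune : u ≠ 0 := by intro h'; simp [h'] at hu1
      rw [hdef u hune, hu1]; simp
    · rw [h0, hg0]
  · have hxzero : ∀ x : X, ‖h x‖ ≤ 3 * K * ‖x‖ := by
      intro x
      rcases eq_or_ne x 0 with rfl | hx
      · simp [h0]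
      rw [hdef x hx, norm_smul, norm_norm]
      have := hbound _ (hnorm1 x hx)
      nlinarith [norm_nonneg x, norm_nonneg (g (‖x‖⁻¹ • x))]
    intro x y
    rcases eq_or_ne x 0 with rfl | hx
    · simpa [h0, norm_sub_rev] using hxzero y
    rcases eq_or_ne y 0 with rfl | hy
    · simpa [h0] using hxzero x
    set xh := ‖x‖⁻¹ • x with hxhdef
    set yh := ‖y‖⁻¹ • y with hyhdef
    have hxh : ‖xh‖ = 1 := hnorm1 x hx
    have hyh : ‖yh‖ = 1 := hnorm1 y hy
    rw [hdef x hx, hdef y hy]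
    have e1 : ‖x‖ • g xh - ‖y‖ • g yh = ‖x‖ • (g xh - g yh) + (‖x‖ - ‖y‖) • g yh := by
      module
    have hxn : ‖x‖ ≠ 0 := norm_ne_zero_iff.mpr hx
    have hyn : ‖y‖ ≠ 0 := norm_ne_zero_iff.mpr hy
    have key : ‖x‖ * ‖xh - yh‖ ≤ 2 * ‖x - y‖ := by
      have e2 : ‖x‖ • (xh - yh) = x - (‖x‖ * ‖y‖⁻¹) • y := by
        rw [hxhdef, hyhdef, smul_sub, smul_smul, smul_smul,
          mul_inv_cancel₀ hxn, one_smul]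
      have e3 : ‖x‖ * ‖xh - yh‖ = ‖x - (‖x‖ * ‖y‖⁻¹) • y‖ := by
        rw [← e2, norm_smul, norm_norm]
      have e4 : ‖y - (‖x‖ * ‖y‖⁻¹) • y‖ = |‖y‖ - ‖x‖| := by
        have : y - (‖x‖ * ‖y‖⁻¹) • y = (1 - ‖x‖ * ‖y‖⁻¹) • y := by module
        rw [this, norm_smul, Real.norm_eq_abs]
        rw [show (1 - ‖x‖ * ‖y‖⁻¹) = (‖y‖ - ‖x‖) * ‖y‖⁻¹ by field_simp]
        rw [abs_mul, abs_inv, abs_norm, mul_assoc, inv_mul_cancel₀ hyn, mul_one]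
      have e5 : |‖y‖ - ‖x‖| ≤ ‖x - y‖ := by
        rw [norm_sub_rev]; exact abs_norm_sub_norm_le y x
      calc ‖x‖ * ‖xh - yh‖ = ‖x - (‖x‖ * ‖y‖⁻¹) • y‖ := e3
        _ ≤ ‖x - y‖ + ‖y - (‖x‖ * ‖y‖⁻¹) • y‖ := by
            have := norm_add_le (x - y) (y - (‖x‖ * ‖y‖⁻¹) • y)
            simpa [sub_add_sub_cancel] using this
        _ ≤ ‖x - y‖ + ‖x - y‖ := by rw [e4]; linarith
        _ = 2 * ‖x - y‖ := by ring
    have hg : ‖g xh - g yh‖ ≤ K * ‖xh - yh‖ := hgL _ (Or.inl hxh) _ (Or.inl hyh)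
    have t1 : ‖‖x‖ • (g xh - g yh)‖ ≤ K * (2 * ‖x - y‖) := by
      rw [norm_smul, norm_norm]
      calc ‖x‖ * ‖g xh - g yh‖ ≤ ‖x‖ * (K * ‖xh - yh‖) :=
            mul_le_mul_of_nonneg_left hg (norm_nonneg x)
        _ = K * (‖x‖ * ‖xh - yh‖) := by ring
        _ ≤ K * (2 * ‖x - y‖) := mul_le_mul_of_nonneg_left key hK
    have t2 : ‖(‖x‖ - ‖y‖) • g yh‖ ≤ K * ‖x - y‖ := by
      rw [norm_smul, Real.norm_eq_abs]
      have e5 : |‖x‖ - ‖y‖| ≤ ‖x - y‖ := abs_norm_sub_norm_le x y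
      have := hbound _ hyh
      have h1 : |‖x‖ - ‖y‖| * ‖g yh‖ ≤ ‖x - y‖ * K := by
        apply mul_le_mul e5 this (norm_nonneg _) (norm_nonneg _)
      linarith
    calc ‖‖x‖ • g xh - ‖y‖ • g yh‖
        = ‖‖x‖ • (g xh - g yh) + (‖x‖ - ‖y‖) • g yh‖ := by rw [e1]
      _ ≤ ‖‖x‖ • (g xh - g yh)‖ + ‖(‖x‖ - ‖y‖) • g yh‖ := norm_add_le _ _
      _ ≤ K * (2 * ‖x - y‖) + K * ‖x - y‖ := by linarith
      _ = 3 * K * ‖x - y‖ := by ring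
end

section
/- Let X and Z be real normed spaces, let K ≥ 0, and let f : X → Z be positively homogeneous (f(α·x) = α·f(x) for all α ≥ 0 and x ∈ X). If ‖f(u) − f(v)‖ ≤ K·‖u − v‖ for all u, v in S_X ∪ {0}, where S_X = {x ∈ X : ‖x‖ = 1}, then f is (3K)-Lipschitz on all of X: ‖f(x) − f(y)‖ ≤ 3K·‖x − y‖ for all x, y ∈ X. -/
/-- A positively homogeneous map between real normed spaces that is
`K`-Lipschitz on the unit sphere together with the origin is `3K`-Lipschitz
on the whole space. -/
theorem stmt_6 {X Z : Type*} [NormedAddCommGroup X] [NormedSpace ℝ X]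
    [NormedAddCommGroup Z] [NormedSpace ℝ Z]
    (K : ℝ) (hK : 0 ≤ K) (f : X → Z)
    (hfh : ∀ (α : ℝ), 0 ≤ α → ∀ x : X, f (α • x) = α • f x)
    (hfL : ∀ u ∈ {x : X | ‖x‖ = 1} ∪ {0}, ∀ v ∈ {x : X | ‖x‖ = 1} ∪ {0},
        ‖f u - f v‖ ≤ K * ‖u - v‖) :
    ∀ x y : X, ‖f x - f y‖ ≤ 3 * K * ‖x - y‖ := by
  have hf0 : f 0 = 0 := by simpa using hfh 0 le_rfl 0
  suffices h : ∀ x y : X, ‖y‖ ≤ ‖x‖ → ‖f x - f y‖ ≤ 3 * K * ‖x - y‖ by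
    intro x y
    rcases le_total ‖y‖ ‖x‖ with hle | hle
    · exact h x y hle
    · rw [norm_sub_rev (f x), norm_sub_rev x]; exact h y x hle
  intro x y hle
  rcases eq_or_ne x 0 with hx | hx
  · have hy : y = 0 := by
      have : ‖y‖ ≤ 0 := by simpa [hx] using hle
      simpa using le_antisymm this (norm_nonneg y)
    simp [hx, hy, hf0]
  · have hxn : 0 < ‖x‖ := norm_pos_iff.mpr hx
    set u := ‖x‖⁻¹ • x with hu
    have hun : ‖u‖ = 1 := by
      simp [hu, norm_smul, abs_of_pos (inv_pos.mpr hxn), inv_mul_cancel₀ hxn.ne']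
    have hxu : f x = ‖x‖ • f u := by
      rw [hu, hfh _ (inv_nonneg.mpr hxn.le)]
      rw [smul_smul, mul_inv_cancel₀ hxn.ne', one_smul]
    have hfunorm : ‖f u‖ ≤ K := by
      have := hfL u (Or.inl hun) 0 (Or.inr rfl)
      simpa [hf0, hun] using this
    rcases eq_or_ne y 0 with hy | hy
    · have hx' : ‖x - y‖ = ‖x‖ := by simp [hy]
      calc ‖f x - f y‖ = ‖x‖ * ‖f u‖ := by
            simp [hy, hf0, hxu, norm_smul, abs_of_pos hxn]
        _ ≤ 3 * K * ‖x - y‖ := by rw [hx']; nlinarith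
    · have hyn : 0 < ‖y‖ := norm_pos_iff.mpr hy
      set v := ‖y‖⁻¹ • y with hv
      have hvn : ‖v‖ = 1 := by
        simp [hv, norm_smul, abs_of_pos (inv_pos.mpr hyn), inv_mul_cancel₀ hyn.ne']
      have hyv : f y = ‖y‖ • f v := by
        rw [hv, hfh _ (inv_nonneg.mpr hyn.le)]
        rw [smul_smul, mul_inv_cancel₀ hyn.ne', one_smul]
      have huv : ‖f u - f v‖ ≤ K * ‖u - v‖ := hfL u (Or.inl hun) v (Or.inl hvn)
      have hnn : ‖x‖ - ‖y‖ ≤ ‖x - y‖ := by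
        have := norm_sub_norm_le x y
        linarith [le_abs_self (‖x‖ - ‖y‖)]
      have key : ‖y‖ * ‖u - v‖ ≤ 2 * ‖x - y‖ := by
        have h1 : ‖y‖ • u - ‖y‖ • v = ((‖y‖ * ‖x‖⁻¹) • x - x) + (x - y) := by
          rw [hu, hv, smul_smul, smul_smul, mul_inv_cancel₀ hyn.ne', one_smul]
          abel
        have h2 : ‖(‖y‖ * ‖x‖⁻¹) • x - x‖ = ‖x‖ - ‖y‖ := by
          have : (‖y‖ * ‖x‖⁻¹) • x - x = (‖y‖ * ‖x‖⁻¹ - 1) • x := by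
            rw [sub_smul, one_smul]
          rw [this, norm_smul, Real.norm_eq_abs]
          have hc : ‖y‖ * ‖x‖⁻¹ - 1 ≤ 0 := by
            have : ‖y‖ * ‖x‖⁻¹ ≤ 1 := by
              rw [← div_eq_mul_inv, div_le_one hxn]; exact hle
            linarith
          rw [abs_of_nonpos hc]
          field_simp
          ring
        have h3 : ‖‖y‖ • u - ‖y‖ • v‖ ≤ (‖x‖ - ‖y‖) + ‖x - y‖ := by
          rw [h1]
          calc ‖((‖y‖ * ‖x‖⁻¹) • x - x) + (x - y)‖
              ≤ ‖(‖y‖ * ‖x‖⁻¹) • x - x‖ + ‖x - y‖ := norm_add_le _ _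
            _ = (‖x‖ - ‖y‖) + ‖x - y‖ := by rw [h2]
        have h4 : ‖‖y‖ • u - ‖y‖ • v‖ = ‖y‖ * ‖u - v‖ := by
          rw [← smul_sub, norm_smul, Real.norm_eq_abs, abs_of_pos hyn]
        linarith
      have hsplit : f x - f y = ‖y‖ • (f u - f v) + (‖x‖ - ‖y‖) • f u := by
        rw [hxu, hyv, smul_sub, sub_smul]
        abel
      calc ‖f x - f y‖ ≤ ‖y‖ * ‖f u - f v‖ + (‖x‖ - ‖y‖) * ‖f u‖ := by
            rw [hsplit]
            refine (norm_add_le _ _).trans ?_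
            rw [norm_smul, norm_smul, Real.norm_eq_abs, Real.norm_eq_abs, abs_of_pos hyn, abs_of_nonneg (by linarith)]
        _ ≤ K * (‖y‖ * ‖u - v‖) + (‖x‖ - ‖y‖) * K := by
            have := mul_le_mul_of_nonneg_left huv hyn.le
            have h5 : (‖x‖ - ‖y‖) * ‖f u‖ ≤ (‖x‖ - ‖y‖) * K :=
              mul_le_mul_of_nonneg_left hfunorm (by linarith)
            nlinarith
        _ ≤ K * (2 * ‖x - y‖) + ‖x - y‖ * K := by
            have := mul_le_mul_of_nonneg_left key hK
            nlinarith
        _ = 3 * K * ‖x - y‖ := by ring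
end

section
/- Let X be a real normed space, let K, L ≥ 0, and let f, g : X → ℝ be positively homogeneous functions that are K-Lipschitz and L-Lipschitz on X, respectively. Define h : X → ℝ by h(x) = (1/5) · ‖x‖ · f(x/‖x‖) · g(x/‖x‖) for x ≠ 0 and h(0) = 0. Then h is positively homogeneous and h is (K·L)-Lipschitz on X. -/
/-- The modified product `h x = (1/5) * ‖x‖ * f(x/‖x‖) * g(x/‖x‖)` (with
`h 0 = 0`) of positively homogeneous functions `f` (`K`-Lipschitz) and `g`
(`L`-Lipschitz) is positively homogeneous and `K*L`-Lipschitz. -/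
theorem stmt_9 {X : Type*} [NormedAddCommGroup X] [NormedSpace ℝ X]
    (K L : ℝ) (hK : 0 ≤ K) (hL : 0 ≤ L) (f g : X → ℝ)
    (hfh : ∀ (α : ℝ), 0 ≤ α → ∀ x : X, f (α • x) = α * f x)
    (hgh : ∀ (α : ℝ), 0 ≤ α → ∀ x : X, g (α • x) = α * g x)
    (hfL : ∀ x y : X, |f x - f y| ≤ K * ‖x - y‖)
    (hgL : ∀ x y : X, |g x - g y| ≤ L * ‖x - y‖)
    (h : X → ℝ)
    (hdef : ∀ x : X, x ≠ 0 →
      h x = (1 / 5) * ‖x‖ * f (‖x‖⁻¹ • x) * g (‖x‖⁻¹ • x))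
    (h0 : h 0 = 0) :
    (∀ (α : ℝ), 0 ≤ α → ∀ x : X, h (α • x) = α * h x) ∧
    (∀ x y : X, |h x - h y| ≤ K * L * ‖x - y‖) := by
  have hf0 : f 0 = 0 := by have := hfh 0 le_rfl 0; simpa using this
  have hg0 : g 0 = 0 := by have := hgh 0 le_rfl 0; simpa using this
  have hfb : ∀ x : X, |f x| ≤ K * ‖x‖ := by
    intro x; have := hfL x 0; simpa [hf0] using this
  have hgb : ∀ x : X, |g x| ≤ L * ‖x‖ := by
    intro x; have := hgL x 0; simpa [hg0] using this
  have hform : ∀ x : X, x ≠ 0 → h x = (1/5) * (f x * g x) / ‖x‖ := by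
    intro x hx
    have hn : (0:ℝ) < ‖x‖ := norm_pos_iff.mpr hx
    have hfx : f (‖x‖⁻¹ • x) = ‖x‖⁻¹ * f x := hfh _ (by positivity) x
    have hgx : g (‖x‖⁻¹ • x) = ‖x‖⁻¹ * g x := hgh _ (by positivity) x
    rw [hdef x hx, hfx, hgx]
    field_simp
  have hhom : ∀ (α : ℝ), 0 ≤ α → ∀ x : X, h (α • x) = α * h x := by
    intro α hα x
    rcases eq_or_lt_of_le hα with h0α | h0α
    · simp [← h0α, h0]
    rcases eq_or_ne x 0 with rfl | hx
    · simp [h0]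
    · have hax : α • x ≠ 0 := smul_ne_zero (ne_of_gt h0α) hx
      have hn : (0:ℝ) < ‖x‖ := norm_pos_iff.mpr hx
      have hnorm : ‖α • x‖ = α * ‖x‖ := by
        rw [norm_smul, Real.norm_eq_abs, abs_of_pos h0α]
      rw [hform _ hax, hform _ hx, hfh α hα x, hgh α hα x, hnorm]
      field_simp
  refine ⟨hhom, ?_⟩
  have main : ∀ x y : X, ‖y‖ ≤ ‖x‖ → |h x - h y| ≤ K * L * ‖x - y‖ := by
    intro x y hle
    rcases eq_or_ne x 0 with rfl | hx
    · have : y = 0 := by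
        have : ‖y‖ = 0 := le_antisymm (by simpa using hle) (norm_nonneg y)
        simpa using this
      subst this; simp [h0]
    have ha : (0:ℝ) < ‖x‖ := norm_pos_iff.mpr hx
    have hd : (0:ℝ) ≤ ‖x - y‖ := norm_nonneg _
    rcases eq_or_ne y 0 with rfl | hy
    · rw [h0, hform x hx]
      have hfgx : |f x * g x| ≤ (K * ‖x‖) * (L * ‖x‖) := by
        rw [abs_mul]
        exact mul_le_mul (hfb x) (hgb x) (abs_nonneg _) (by positivity)
      have : |(1/5) * (f x * g x) / ‖x‖ - 0| = (1/5) * |f x * g x| / ‖x‖ := by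
        rw [sub_zero, abs_div, abs_mul, abs_of_pos (show (0:ℝ) < 1/5 by norm_num),
          abs_of_pos ha]
      rw [this, sub_zero]
      rw [div_le_iff₀ ha]
      nlinarith [mul_nonneg (mul_nonneg hK hL) (mul_nonneg ha.le ha.le)]
    have hb : (0:ℝ) < ‖y‖ := norm_pos_iff.mpr hy
    set a := ‖x‖ with ha'
    set b := ‖y‖ with hb'
    set d := ‖x - y‖ with hd'
    have habd : |a - b| ≤ d := abs_norm_sub_norm_le x y
    have t1 : |f x * g x - f y * g y| ≤ (K * a) * (L * d) + (L * b) * (K * d) := by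
      have e : f x * g x - f y * g y = f x * (g x - g y) + g y * (f x - f y) := by ring
      calc |f x * g x - f y * g y|
          = |f x * (g x - g y) + g y * (f x - f y)| := by rw [e]
        _ ≤ |f x * (g x - g y)| + |g y * (f x - f y)| := abs_add_le _ _
        _ = |f x| * |g x - g y| + |g y| * |f x - f y| := by rw [abs_mul, abs_mul]
        _ ≤ (K * a) * (L * d) + (L * b) * (K * d) := by
            apply add_le_add
            · exact mul_le_mul (hfb x) (hgL x y) (abs_nonneg _) (by positivity)
            · exact mul_le_mul (hgb y) (hfL x y) (abs_nonneg _) (by positivity)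
    have key : |f x * g x * b - f y * g y * a| ≤ 5 * (K * L * d) * (a * b) := by
      have e2 : f x * g x * b - f y * g y * a
          = b * (f x * g x - f y * g y) + f y * g y * (b - a) := by ring
      calc |f x * g x * b - f y * g y * a|
          = |b * (f x * g x - f y * g y) + f y * g y * (b - a)| := by rw [e2]
        _ ≤ |b * (f x * g x - f y * g y)| + |f y * g y * (b - a)| := abs_add_le _ _
        _ = b * |f x * g x - f y * g y| + |f y| * |g y| * |b - a| := by
            rw [abs_mul, abs_mul, abs_mul, abs_of_pos hb]
        _ ≤ b * ((K * a) * (L * d) + (L * b) * (K * d)) + (K * b) * (L * b) * d := by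
            apply add_le_add
            · exact mul_le_mul_of_nonneg_left t1 hb.le
            · have h1 : |f y| * |g y| ≤ (K * b) * (L * b) :=
                mul_le_mul (hfb y) (hgb y) (abs_nonneg _) (by positivity)
              have h2 : |b - a| ≤ d := by rw [abs_sub_comm]; exact habd
              exact mul_le_mul h1 h2 (abs_nonneg _) (by positivity)
        _ ≤ 5 * (K * L * d) * (a * b) := by
            nlinarith [mul_nonneg (mul_nonneg (mul_nonneg (mul_nonneg hK hL) hb.le) hd)
                (sub_nonneg.mpr hle),
              mul_nonneg (mul_nonneg (mul_nonneg (mul_nonneg hK hL) ha.le) hb.le) hd]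
    rw [hform x hx, hform y hy]
    have e3 : (1/5) * (f x * g x) / a - (1/5) * (f y * g y) / b
        = (1/5) * (f x * g x * b - f y * g y * a) / (a * b) := by
      field_simp
    rw [e3]
    have e4 : |(1/5) * (f x * g x * b - f y * g y * a) / (a * b)|
        = |f x * g x * b - f y * g y * a| / (5 * (a * b)) := by
      rw [abs_div, abs_mul, abs_of_pos (show (0:ℝ) < 1/5 by norm_num),
        abs_of_pos (mul_pos ha hb)]
      ring
    rw [e4]
    calc |f x * g x * b - f y * g y * a| / (5 * (a * b))
        ≤ (5 * (K * L * d) * (a * b)) / (5 * (a * b)) := by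
          apply div_le_div_of_nonneg_right key
          positivity
      _ = K * L * d := by field_simp
  intro x y
  rcases le_total ‖y‖ ‖x‖ with hle | hle
  · exact main x y hle
  · have := main y x hle
    rw [abs_sub_comm, norm_sub_rev] at this
    exact this
end

section
/- Let X be a real normed space containing two linearly independent vectors. Then there exists a sequence (f_n)_{n ∈ ℕ} of functions f_n : X → ℝ such that each f_n is positively homogeneous and Lipschitz (for some constant K_n), and the family (f_n) is linearly independent over ℝ in the vector space of real-valued functions on X. In particular, the linear space of positively homogeneous real-valued Lipschitz functions on X is infinite dimensional. -/
/-- second difference of `t ↦ max 0 (t - i)` at an integer point `n` is the Kronecker delta. -/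
lemma second_diff_max (i n : ℕ) :
    max 0 ((n:ℝ) + 1 - i) - 2 * max 0 ((n:ℝ) - i) + max 0 ((n:ℝ) - 1 - i)
      = if i = n then 1 else 0 := by
  rcases lt_trichotomy i n with h | h | h
  · have hin : (i:ℝ) + 1 ≤ n := by exact_mod_cast h
    rw [if_neg (Nat.ne_of_lt h)]
    rw [max_eq_right (by linarith), max_eq_right (by linarith), max_eq_right (by linarith)]
    ring
  · subst h
    rw [if_pos rfl]
    rw [max_eq_right (by linarith), max_eq_left (by linarith), max_eq_left (by linarith)]
    ring
  · have hin : (n:ℝ) + 1 ≤ i := by exact_mod_cast h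
    rw [if_neg (Nat.ne_of_gt h)]
    rw [max_eq_left (by linarith), max_eq_left (by linarith), max_eq_left (by linarith)]
    ring

/-- If a real normed space `X` contains two linearly independent vectors, then
there is a linearly independent sequence of positively homogeneous Lipschitz
functions `X → ℝ`; in particular the space of positively homogeneous
real-valued Lipschitz functions on `X` is infinite dimensional. -/
theorem stmt_13 {X : Type*} [NormedAddCommGroup X] [NormedSpace ℝ X]
    (hX : ∃ x y : X, LinearIndependent ℝ ![x, y]) :
    ∃ f : ℕ → X → ℝ,
      (∀ n : ℕ,
        (∀ (α : ℝ), 0 ≤ α → ∀ x : X, f n (α • x) = α * f n x) ∧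
        (∃ K : ℝ, 0 ≤ K ∧ ∀ x y : X, |f n x - f n y| ≤ K * ‖x - y‖)) ∧
      LinearIndependent ℝ f := by
  obtain ⟨x, y, hxy⟩ := hX
  -- construct dual continuous linear functionals
  obtain ⟨φ, ψ, hφx, hφy, hψx, hψy⟩ :
      ∃ φ ψ : X →L[ℝ] ℝ, φ x = 1 ∧ φ y = 0 ∧ ψ x = 0 ∧ ψ y = 1 := by
    set S := Submodule.span ℝ (Set.range ![x, y]) with hS
    have hfin : FiniteDimensional ℝ S := FiniteDimensional.span_of_finite ℝ (Set.finite_range _)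
    let b : Module.Basis (Fin 2) ℝ S := Module.Basis.span hxy
    have hx : x ∈ S := Submodule.subset_span ⟨0, rfl⟩
    have hy : y ∈ S := Submodule.subset_span ⟨1, rfl⟩
    have hb0 : b 0 = ⟨x, hx⟩ := Subtype.ext (congrArg Subtype.val (Module.Basis.span_apply hxy 0))
    have hb1 : b 1 = ⟨y, hy⟩ := Subtype.ext (congrArg Subtype.val (Module.Basis.span_apply hxy 1))
    obtain ⟨φ, hφ, -⟩ :=
      exists_extension_norm_eq S (LinearMap.toContinuousLinearMap (b.coord 0))
    obtain ⟨ψ, hψ, -⟩ :=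
      exists_extension_norm_eq S (LinearMap.toContinuousLinearMap (b.coord 1))
    refine ⟨φ, ψ, ?_, ?_, ?_, ?_⟩
    · have h : φ ↑(b 0) = 1 := by simpa using hφ (b 0)
      rw [hb0] at h; exact h
    · have h : φ ↑(b 1) = 0 := by simpa using hφ (b 1)
      rw [hb1] at h; exact h
    · have h : ψ ↑(b 0) = 0 := by simpa using hψ (b 0)
      rw [hb0] at h; exact h
    · have h : ψ ↑(b 1) = 1 := by simpa using hψ (b 1)
      rw [hb1] at h; exact h
  refine ⟨fun n v => max 0 (φ v - (n : ℝ) * ψ v), ?_, ?_⟩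
  · intro n
    constructor
    · intro α hα v
      simp only [map_smul, smul_eq_mul]
      have h : α * φ v - (n:ℝ) * (α * ψ v) = α * (φ v - (n:ℝ) * ψ v) := by ring
      rw [h, mul_max_of_nonneg _ _ hα, mul_zero]
    · refine ⟨‖φ‖ + (n : ℝ) * ‖ψ‖, by positivity, fun v w => ?_⟩
      have h1 : |max 0 (φ v - (n : ℝ) * ψ v) - max 0 (φ w - (n : ℝ) * ψ w)| ≤
          |(φ v - (n : ℝ) * ψ v) - (φ w - (n : ℝ) * ψ w)| := by
        rw [max_comm 0 _, max_comm 0 _]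
        exact abs_max_sub_max_le_abs _ _ _
      refine h1.trans ?_
      have h2 : (φ v - (n : ℝ) * ψ v) - (φ w - (n : ℝ) * ψ w)
          = φ (v - w) - (n : ℝ) * ψ (v - w) := by simp [map_sub]; ring
      rw [h2]
      calc |φ (v - w) - (n : ℝ) * ψ (v - w)| ≤ |φ (v - w)| + |(n : ℝ) * ψ (v - w)| :=
            abs_sub _ _
        _ ≤ ‖φ‖ * ‖v - w‖ + (n : ℝ) * (‖ψ‖ * ‖v - w‖) := by
            rw [abs_mul, abs_of_nonneg (by positivity : (0:ℝ) ≤ (n:ℝ))]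
            gcongr
            · exact φ.le_opNorm _
            · exact ψ.le_opNorm _
        _ = (‖φ‖ + (n : ℝ) * ‖ψ‖) * ‖v - w‖ := by ring
  · rw [linearIndependent_iff']
    intro s g hsum n hn
    -- evaluation at `t • x + y` gives `∑ g i * max 0 (t - i) = 0`
    have H : ∀ t : ℝ, ∑ i ∈ s, g i * max 0 (t - (i : ℝ)) = 0 := by
      intro t
      have h := congrFun hsum (t • x + y)
      simpa [map_add, map_smul, hφx, hφy, hψx, hψy, Finset.sum_apply, mul_comm] using h
    have key : ∑ i ∈ s, g i *
        (max 0 ((n:ℝ) + 1 - i) - 2 * max 0 ((n:ℝ) - i) + max 0 ((n:ℝ) - 1 - i)) = 0 := by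
      have h1 := H ((n:ℝ) + 1)
      have h2 := H (n:ℝ)
      have h3 := H ((n:ℝ) - 1)
      calc ∑ i ∈ s, g i *
            (max 0 ((n:ℝ) + 1 - i) - 2 * max 0 ((n:ℝ) - i) + max 0 ((n:ℝ) - 1 - i))
          = (∑ i ∈ s, g i * max 0 ((n:ℝ) + 1 - i)) -
              2 * (∑ i ∈ s, g i * max 0 ((n:ℝ) - i)) +
              ∑ i ∈ s, g i * max 0 ((n:ℝ) - 1 - i) := by
            rw [Finset.mul_sum, ← Finset.sum_sub_distrib, ← Finset.sum_add_distrib]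
            exact Finset.sum_congr rfl fun i _ => by ring
        _ = 0 := by rw [h1, h2, h3]; ring
    simp only [second_diff_max] at key
    simpa [mul_ite, Finset.sum_ite_eq', hn] using key
end

section
/- Let X be a real normed space, let Z ⊆ X be a linear subspace, let K ≥ 0, and let f : Z → ℝ be positively homogeneous on Z (f(α·z) = α·f(z) for all α ≥ 0 and z ∈ Z) and K-Lipschitz on Z. Then there exists F : X → ℝ positively homogeneous on X, K-Lipschitz on X, with F(z) = f(z) for all z ∈ Z. -/
open Pointwise


/-- A positively homogeneous `K`-Lipschitz function on a linear subspace `Z`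
of a real normed space `X` extends to a positively homogeneous `K`-Lipschitz
function on all of `X`. -/
theorem stmt_14 {X : Type*} [NormedAddCommGroup X] [NormedSpace ℝ X]
    (Z : Submodule ℝ X) (K : ℝ) (hK : 0 ≤ K) (f : X → ℝ)
    (hfh : ∀ (α : ℝ), 0 ≤ α → ∀ z ∈ Z, f (α • z) = α * f z)
    (hfL : ∀ z ∈ Z, ∀ w ∈ Z, |f z - f w| ≤ K * ‖z - w‖) :
    ∃ F : X → ℝ,
      (∀ (α : ℝ), 0 ≤ α → ∀ x : X, F (α • x) = α * F x) ∧
      (∀ x y : X, |F x - F y| ≤ K * ‖x - y‖) ∧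
      (∀ z ∈ Z, F z = f z) := by
  have hf0 : f 0 = 0 := by
    have := hfh 0 le_rfl 0 Z.zero_mem
    simpa using this
  have hfabs : ∀ z ∈ Z, |f z| ≤ K * ‖z‖ := by
    intro z hz
    have := hfL z hz 0 Z.zero_mem
    simpa [hf0] using this
  set S : X → Set ℝ := fun x => (fun z => f z + K * ‖x - z‖) '' Z with hS
  have hne : ∀ x, (S x).Nonempty := fun x => ⟨_, ⟨0, Z.zero_mem, rfl⟩⟩
  have hbdd : ∀ x, BddBelow (S x) := by
    intro x
    refine ⟨-(K * ‖x‖), ?_⟩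
    rintro r ⟨z, hz, rfl⟩
    have h1 : -(K * ‖z‖) ≤ f z := neg_le_of_abs_le (hfabs z hz)
    have h2 : ‖z‖ - ‖x‖ ≤ ‖z - x‖ := norm_sub_norm_le z x
    have h3 : ‖z - x‖ = ‖x - z‖ := norm_sub_rev z x
    show -(K * ‖x‖) ≤ f z + K * ‖x - z‖
    nlinarith [norm_nonneg z, norm_nonneg x, norm_nonneg (x - z)]
  refine ⟨fun x => sInf (S x), ?_, ?_, ?_⟩
  · -- positive homogeneity
    intro α hα x
    rcases eq_or_lt_of_le hα with h0 | h0
    · -- α = 0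
      subst h0
      simp only [zero_smul, zero_mul]
      refine le_antisymm ?_ ?_
      · have := csInf_le (hbdd 0) (⟨0, Z.zero_mem, by simp [hf0]⟩ : (0:ℝ) ∈ S 0)
        simpa using this
      · refine le_csInf (hne 0) ?_
        rintro r ⟨z, hz, rfl⟩
        have h1 : -(K * ‖z‖) ≤ f z := neg_le_of_abs_le (hfabs z hz)
        show (0:ℝ) ≤ f z + K * ‖(0:X) - z‖
        have h2 : ‖(0:X) - z‖ = ‖z‖ := by simp
        rw [h2]
        linarith
    · -- α > 0
      have hset : S (α • x) = α • (S x) := by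
        ext r
        simp only [hS, Set.mem_image, Set.mem_smul_set, SetLike.mem_coe]
        constructor
        · rintro ⟨z, hz, rfl⟩
          refine ⟨f (α⁻¹ • z) + K * ‖x - α⁻¹ • z‖, ⟨α⁻¹ • z, Z.smul_mem _ hz, rfl⟩, ?_⟩
          have hz' : (α⁻¹ • z : X) ∈ Z := Z.smul_mem _ hz
          have hfa : f (α • (α⁻¹ • z)) = α * f (α⁻¹ • z) := hfh α hα _ hz'
          have hrec : α • (α⁻¹ • z) = z := by
            rw [smul_smul, mul_inv_cancel₀ h0.ne', one_smul]
          have hdiff : α • x - z = α • (x - α⁻¹ • z) := by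
            rw [smul_sub, smul_smul, mul_inv_cancel₀ h0.ne', one_smul]
          have hnorm : ‖α • x - z‖ = α * ‖x - α⁻¹ • z‖ := by
            rw [hdiff, norm_smul, Real.norm_eq_abs, abs_of_pos h0]
          have hfz : f z = α * f (α⁻¹ • z) := by rw [← hfa, hrec]
          rw [smul_eq_mul, hnorm, hfz]
          ring
        · rintro ⟨r, ⟨z, hz, rfl⟩, rfl⟩
          refine ⟨α • z, Z.smul_mem _ hz, ?_⟩
          have hfa : f (α • z) = α * f z := hfh α hα z hz
          have hnorm : ‖α • x - α • z‖ = α * ‖x - z‖ := by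
            rw [← smul_sub, norm_smul, Real.norm_eq_abs, abs_of_pos h0]
          rw [hfa, hnorm, smul_eq_mul]
          ring
      show sInf (S (α • x)) = α * sInf (S x)
      rw [hset, Real.sInf_smul_of_nonneg hα, smul_eq_mul]
  · -- Lipschitz
    have key : ∀ x y : X, sInf (S x) - sInf (S y) ≤ K * ‖x - y‖ := by
      intro x y
      have h : sInf (S x) - K * ‖x - y‖ ≤ sInf (S y) := by
        refine le_csInf (hne y) ?_
        rintro r ⟨z, hz, rfl⟩
        have h1 : sInf (S x) ≤ f z + K * ‖x - z‖ := csInf_le (hbdd x) ⟨z, hz, rfl⟩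
        have h2 : ‖x - z‖ ≤ ‖x - y‖ + ‖y - z‖ := norm_sub_le_norm_sub_add_norm_sub x y z
        show sInf (S x) - K * ‖x - y‖ ≤ f z + K * ‖y - z‖
        nlinarith
      linarith
    intro x y
    rw [abs_sub_le_iff]
    constructor
    · exact key x y
    · rw [norm_sub_rev]; exact key y x
  · -- agreement on Z
    intro z hz
    refine le_antisymm ?_ ?_
    · have := csInf_le (hbdd z) (⟨z, hz, rfl⟩ : f z + K * ‖z - z‖ ∈ S z)
      simpa using this
    · refine le_csInf (hne z) ?_
      rintro r ⟨w, hw, rfl⟩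
      have h := hfL z hz w hw
      rw [abs_sub_le_iff] at h
      show f z ≤ f w + K * ‖z - w‖
      linarith [h.1]
end
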